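/- There exists a universal constant K such that the following holds for all ε, δ ∈ (0, 1/2) and all integers d' dividing d with d' ≥ K · ε^{−2} · log(1/δ). Let R be a random d×d orthogonal matrix distributed according to Haar measure on the orthogonal group O(d), and for each i = 1, …, d/d' let P_i be the d'×d matrix consisting of rows (i−1)d' + 1 through i·d' of R. Then {P_i}_{i=1}^{d/d'} is almost surely an orthogonal decomposition of ℝ^d into ℝ^{d'}, and for every x ∈ ℝ^d with ‖x‖₂ = 1 and every i, ℙ( |√(d/d') · ‖P_i x‖₂ − 1| > ε ) < δ. -/

import Mathlib

/-!
Fix a unit vector `x` and a block `B` of `d'` rows. The vector `y = R x` is an `O(d)`-invariant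
random unit vector and `‖P_i x‖² = S := ∑_{t ∈ B} y_t²`. Differentiating, at angle `0`, the
invariance of `𝔼[y_t y_s e^{cS}]` under rotations of the `(t, s)`-plane (`t ∈ B`, `s ∉ B`) and
summing over such pairs gives Stein's identity `𝔼[(d S - d' - 2c S (1 - S)) e^{cS}] = 0`. For the
moment generating function `ψ` of `S` it says that `ψ(c)² (1 - 2c/d)^{d'}` increases on `c ≤ 0`
and decreases on `0 ≤ c < d/2`, so `ψ(c) ≤ (1 - 2c/d)^{-d'/2}`, the moment generating function
of `χ²_{d'} / d`. Chernoff's bound then gives `ℙ(|√(d/d') ‖P_i x‖ - 1| > ε) ≤ 2 e^{-d' ε²/2}`,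
which is `< δ` as soon as `d' ≥ 4 ε⁻² log(1/δ)`.
-/

open MeasureTheory

/-- The `i`-th block of `d'` consecutive rows of a `d×d` matrix `R` (given as `R : Fin d →
Fin d → ℝ`): rows `i·d'` through `i·d' + d' − 1` in 0-indexed notation, i.e. rows
`(i−1)d' + 1` through `i·d'` 1-indexed. -/
def rowBlock (d d' : ℕ) (hdvd : d' ∣ d) (R : Fin d → Fin d → ℝ)
    (i : Fin (d / d')) : Fin d' → Fin d → ℝ :=
  fun a j => R ⟨i.val * d' + a.val, by
    have h1 : (i.val + 1) * d' ≤ (d / d') * d' :=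
      Nat.mul_le_mul_right d' (Nat.succ_le_of_lt i.isLt)
    have h2 : (d / d') * d' = d := Nat.div_mul_cancel hdvd
    have ha : a.val < d' := a.isLt
    calc i.val * d' + a.val < (i.val + 1) * d' := by nlinarith
      _ ≤ d := by rw [h2] at h1; exact h1⟩ j

/-- `{P_i}_{i=1}^{d/d'}` is an orthogonal decomposition of `ℝ^d` into `ℝ^{d'}`: the set of all
rows of the `P_i` forms an orthonormal basis of `ℝ^d` (equivalently, since there are exactly
`(d/d')·d' = d` rows, the rows are pairwise orthonormal). -/
def IsOrthDecomp (d d' : ℕ) (P : Fin (d / d') → Fin d' → Fin d → ℝ) : Prop :=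
  ∀ (i : Fin (d / d')) (a : Fin d') (j : Fin (d / d')) (b : Fin d'),
    (∑ t, P i a t * P j b t) = if i = j ∧ a = b then 1 else 0

open Matrix Real ProbabilityTheory

section Orthogonal

variable {n : Type*} [Fintype n] [DecidableEq n]

lemma mem_orthogonalGroup_iff_sum_mul_eq {Q : Matrix n n ℝ} :
    Q ∈ orthogonalGroup n ℝ ↔ ∀ i j, ∑ t, Q i t * Q j t = if i = j then 1 else 0 := by
  rw [mem_orthogonalGroup_iff, ← Matrix.ext_iff]
  simp only [mul_apply, transpose_apply, one_apply]

lemma mem_orthogonalGroup_iff_dotProduct_mulVec {Q : Matrix n n ℝ} :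
    Q ∈ orthogonalGroup n ℝ ↔ ∀ z w : n → ℝ, (Q *ᵥ z) ⬝ᵥ (Q *ᵥ w) = z ⬝ᵥ w := by
  have key : ∀ z w : n → ℝ, (Q *ᵥ z) ⬝ᵥ (Q *ᵥ w) = z ⬝ᵥ ((Qᵀ * Q) *ᵥ w) := fun z w => by
    rw [← mulVec_mulVec, dotProduct_transpose_mulVec, dotProduct_comm]
  simp only [key, mem_orthogonalGroup_iff']
  refine ⟨fun h z w => by rw [h, one_mulVec], fun h => ext_of_mulVec_single fun j => ?_⟩
  rw [one_mulVec]
  exact dotProduct_eq _ _ fun u => by rw [dotProduct_comm, h, dotProduct_comm]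

lemma ae_mem_orthogonalGroup_of_measure_eq_one {μ : Measure (n → n → ℝ)} [IsProbabilityMeasure μ]
    (h : μ {R | ∀ i j, ∑ t, R i t * R j t = if i = j then (1 : ℝ) else 0} = 1) :
    ∀ᵐ R ∂μ, R ∈ orthogonalGroup n ℝ := by
  have hmeas : MeasurableSet
      {R : n → n → ℝ | ∀ i j, ∑ t, R i t * R j t = if i = j then 1 else 0} := by
    simp only [Set.ofPred_forall]
    exact .iInter fun i => .iInter fun j => measurableSet_eq_fun (by fun_prop) measurable_const
  filter_upwards [ae_iff.2 ((prob_compl_eq_zero_iff hmeas).2 h)] with R hR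
  exact mem_orthogonalGroup_iff_sum_mul_eq.2 hR

noncomputable def givensRotation (t s : n) (θ : ℝ) : Matrix n n ℝ := Matrix.of fun p =>
  if p = t then cos θ • Pi.single t 1 - sin θ • Pi.single s 1
  else if p = s then sin θ • Pi.single t 1 + cos θ • Pi.single s 1
  else Pi.single p 1

lemma givensRotation_mulVec_apply (t s : n) (θ : ℝ) (z : n → ℝ) (p : n) :
    (givensRotation t s θ *ᵥ z) p = if p = t then cos θ * z t - sin θ * z s
      else if p = s then sin θ * z t + cos θ * z s else z p := by
  simp only [givensRotation, mulVec, of_apply]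
  split_ifs <;> simp only [sub_dotProduct, add_dotProduct, smul_dotProduct, single_dotProduct,
    smul_eq_mul, one_mul]

lemma givensRotation_mem_orthogonalGroup {t s : n} (hts : t ≠ s) (θ : ℝ) :
    givensRotation t s θ ∈ orthogonalGroup n ℝ := by
  refine mem_orthogonalGroup_iff_dotProduct_mulVec.2 fun z w => ?_
  have hsplit : ∀ f : n → ℝ, ∑ p, f p = f t + f s + ∑ p ∈ {t, s}ᶜ, f p := fun f => by
    rw [← Finset.sum_add_sum_compl {t, s}, Finset.sum_pair hts]
  have hrest : ∀ p ∈ ({t, s} : Finset n)ᶜ,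
      (givensRotation t s θ *ᵥ z) p * (givensRotation t s θ *ᵥ w) p = z p * w p := fun p hp => by
    simp only [Finset.mem_compl, Finset.mem_insert, Finset.mem_singleton, not_or] at hp
    simp [givensRotation_mulVec_apply, hp.1, hp.2]
  rw [dotProduct, dotProduct, hsplit, hsplit fun p => z p * w p, Finset.sum_congr rfl hrest]
  simp only [givensRotation_mulVec_apply, if_neg hts.symm, ↓reduceIte]
  linear_combination (z t * w t + z s * w s) * sin_sq_add_cos_sq θ

end Orthogonal

section PartialSqNorm

variable {n : Type*}

def partialSqNorm (B : Finset n) (z : n → ℝ) : ℝ := ∑ t ∈ B, z t ^ 2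

@[fun_prop]
lemma continuous_partialSqNorm (B : Finset n) : Continuous (partialSqNorm B) := by
  unfold partialSqNorm
  fun_prop

lemma partialSqNorm_nonneg (B : Finset n) (z : n → ℝ) : 0 ≤ partialSqNorm B z :=
  Finset.sum_nonneg fun t _ => sq_nonneg (z t)

variable [Fintype n] [DecidableEq n]

lemma partialSqNorm_add_partialSqNorm_compl (B : Finset n) (z : n → ℝ) :
    partialSqNorm B z + partialSqNorm Bᶜ z = z ⬝ᵥ z := by
  simp only [partialSqNorm, Finset.sum_add_sum_compl, dotProduct, sq]

lemma partialSqNorm_givensRotation_mulVec {B : Finset n} {t s : n} (ht : t ∈ B) (hs : s ∉ B) (θ : ℝ)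
    (z : n → ℝ) : partialSqNorm B (givensRotation t s θ *ᵥ z) =
      partialSqNorm B z - z t ^ 2 + (cos θ * z t - sin θ * z s) ^ 2 := by
  have hrest : ∀ p ∈ B.erase t, (givensRotation t s θ *ᵥ z) p ^ 2 = z p ^ 2 := fun p hp => by
    have hps : p ≠ s := fun h => hs (h ▸ Finset.mem_of_mem_erase hp)
    rw [givensRotation_mulVec_apply, if_neg (Finset.ne_of_mem_erase hp), if_neg hps]
  rw [partialSqNorm, partialSqNorm, ← Finset.add_sum_erase B _ ht, ← Finset.add_sum_erase B _ ht,
    Finset.sum_congr rfl hrest, givensRotation_mulVec_apply, if_pos rfl]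
  ring

end PartialSqNorm

section CompactSupport

variable {E : Type*} [TopologicalSpace E] [T2Space E] [MeasurableSpace E] [OpensMeasurableSpace E]
  {ν : Measure E} [IsFiniteMeasure ν] {K : Set E}

lemma integrable_of_continuous_of_ae_mem_compact (hK : IsCompact K) (hνK : ∀ᵐ z ∂ν, z ∈ K)
    {f : E → ℝ} (hf : Continuous f) : Integrable f ν := by
  rw [← Measure.restrict_eq_self_of_ae_mem hνK]
  exact hf.continuousOn.integrableOn_compact hK

lemma hasDerivAt_integral_of_continuous_of_ae_mem_compact (hK : IsCompact K)
    (hνK : ∀ᵐ z ∂ν, z ∈ K) {F F' : ℝ → E → ℝ} (hF : Continuous (Function.uncurry F))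
    (hF' : Continuous (Function.uncurry F')) (hderiv : ∀ x z, HasDerivAt (F · z) (F' x z) x)
    (x₀ : ℝ) : HasDerivAt (fun x => ∫ z, F x z ∂ν) (∫ z, F' x₀ z ∂ν) x₀ := by
  obtain ⟨C, hC⟩ := ((isCompact_closedBall x₀ 1).prod hK).exists_bound_of_continuousOn
    hF'.continuousOn
  refine (hasDerivAt_integral_of_dominated_loc_of_deriv_le (bound := fun _ => C)
    (Metric.ball_mem_nhds x₀ one_pos)
    (.of_forall fun x => (hF.uncurry_left x).aestronglyMeasurable)
    (integrable_of_continuous_of_ae_mem_compact hK hνK (hF.uncurry_left x₀))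
    (hF'.uncurry_left x₀).aestronglyMeasurable ?_ (integrable_const C)
    (.of_forall fun z x _ => hderiv x z)).2
  filter_upwards [hνK] with z hz x hx
  exact hC (x, z) ⟨Metric.ball_subset_closedBall hx, hz⟩

end CompactSupport

lemma apply_le_apply_zero_of_mul_deriv_nonpos {f f' : ℝ → ℝ} {r : ℝ} (hr : 0 < r)
    (hf : ∀ x < r, HasDerivAt f (f' x) x) (hsign : ∀ x < r, x * f' x ≤ 0) {x : ℝ} (hx : x < r) :
    f x ≤ f 0 := by
  have hcont : ∀ a b, b < r → ContinuousOn f (Set.Icc a b) := fun a b hb y hy =>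
    (hf y (hy.2.trans_lt hb)).continuousAt.continuousWithinAt
  have hdiff : ∀ a b, b < r → DifferentiableOn ℝ f (interior (Set.Icc a b)) := fun a b hb y hy =>
    (hf y ((interior_subset hy).2.trans_lt hb)).differentiableAt.differentiableWithinAt
  rcases le_total x 0 with hx0 | hx0
  · refine monotoneOn_of_deriv_nonneg (convex_Icc x 0) (hcont x 0 hr) (hdiff x 0 hr)
      (fun y hy => ?_) ⟨le_rfl, hx0⟩ ⟨hx0, le_rfl⟩ hx0
    rw [interior_Icc] at hy
    rw [(hf y (hy.2.trans hr)).deriv]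
    exact nonneg_of_mul_nonpos_right (hsign y (hy.2.trans hr)) hy.2
  · refine antitoneOn_of_deriv_nonpos (convex_Icc 0 x) (hcont 0 x hx) (hdiff 0 x hx)
      (fun y hy => ?_) ⟨le_rfl, hx0⟩ ⟨hx0, le_rfl⟩ hx0
    rw [interior_Icc] at hy
    rw [(hf y (hy.2.trans hx)).deriv]
    exact nonpos_of_mul_nonpos_right (hsign y (hy.2.trans hx)) hy.1

/-- Chernoff's bound at the optimal parameter `c = d (1 - γ⁻¹) / 2`. -/
lemma le_exp_of_chernoff_of_mgf_sq_mul_pow_le_one {X M γ d : ℝ} {m : ℕ} (hγ : 0 < γ)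
    (hd : 0 < d) (hX0 : 0 ≤ X) (hX : X ≤ exp (-(d / 2 * (1 - γ⁻¹)) * (γ * (m / d))) * M)
    (hM : M ^ 2 * (1 - 2 * (d / 2 * (1 - γ⁻¹)) / d) ^ m ≤ 1) :
    X ≤ exp (-(m * (γ - 1 - log γ)) / 2) := by
  have hexp : -(d / 2 * (1 - γ⁻¹)) * (γ * (m / d)) = -(m * (γ - 1)) / 2 := by
    field_simp
  have hbase : 1 - 2 * (d / 2 * (1 - γ⁻¹)) / d = γ⁻¹ := by
    field_simp
    ring
  rw [hexp] at hX
  rw [hbase, inv_pow, ← div_eq_mul_inv, div_le_one (by positivity)] at hM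
  have hsq : X ^ 2 ≤ exp (-(m * (γ - 1 - log γ)) / 2) ^ 2 := calc
    X ^ 2 ≤ (exp (-(m * (γ - 1)) / 2) * M) ^ 2 := pow_le_pow_left₀ hX0 hX 2
    _ = exp (-(m * (γ - 1))) * M ^ 2 := by rw [mul_pow, ← exp_nat_mul]; push_cast; ring_nf
    _ ≤ exp (-(m * (γ - 1))) * exp (log γ) ^ m := by
        rw [exp_log hγ]
        exact mul_le_mul_of_nonneg_left hM (exp_pos _).le
    _ = exp (-(m * (γ - 1 - log γ)) / 2) ^ 2 := by
        rw [← exp_nat_mul, ← exp_nat_mul, ← exp_add]; push_cast; ring_nf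
  exact (pow_le_pow_iff_left₀ hX0 (exp_pos _).le two_ne_zero).1 hsq

lemma sq_le_one_add_sq_sub_one_sub_log {η : ℝ} (hη : -1 < η) :
    η ^ 2 ≤ (1 + η) ^ 2 - 1 - log ((1 + η) ^ 2) := by
  have hlog : log (1 + η) ≤ η := by linarith [log_le_sub_one_of_pos (by linarith : 0 < 1 + η)]
  rw [log_pow]
  push_cast
  nlinarith

lemma le_or_le_of_lt_abs_sqrt_mul_sqrt_sub_one {p q s ε : ℝ} (hp : 0 < p) (hq : 0 < q)
    (hs : 0 ≤ s) (hε : 0 ≤ ε) (h : ε < |√(p / q) * √s - 1|) :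
    (1 + ε) ^ 2 * (q / p) ≤ s ∨ s ≤ (1 - ε) ^ 2 * (q / p) := by
  have hu : (√(p / q) * √s) ^ 2 = p / q * s := by
    rw [mul_pow, sq_sqrt (by positivity), sq_sqrt hs]
  have hs' : s = p / q * s * (q / p) := by field_simp
  rcases lt_abs.1 h with h1 | h1
  · left
    rw [hs', ← hu]
    gcongr
    linarith
  · right
    rw [hs', ← hu]
    gcongr
    linarith

/-- The law of `R x` for a Haar-distributed `R` and a unit vector `x`. -/
structure IsOrthogonallyInvariantOnSphere {n : Type*} [Fintype n] [DecidableEq n]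
    (ν : Measure (n → ℝ)) : Prop where
  ae_dotProduct_self : ∀ᵐ z ∂ν, z ⬝ᵥ z = 1
  map_mulVec : ∀ Q ∈ orthogonalGroup n ℝ, ν.map (Q *ᵥ ·) = ν

namespace IsOrthogonallyInvariantOnSphere

variable {n : Type*} [Fintype n] [DecidableEq n] {ν : Measure (n → ℝ)}

lemma ae_mem_closedBall (hν : IsOrthogonallyInvariantOnSphere ν) :
    ∀ᵐ z ∂ν, z ∈ Metric.closedBall 0 1 := by
  filter_upwards [hν.ae_dotProduct_self] with z hz
  rw [mem_closedBall_zero_iff, pi_norm_le_iff_of_nonneg zero_le_one]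
  intro t
  rw [Real.norm_eq_abs, ← sq_le_one_iff_abs_le_one, ← hz, dotProduct, sq]
  exact Finset.single_le_sum (fun u _ => mul_self_nonneg (z u)) (Finset.mem_univ t)

lemma card_pos [NeZero ν] (hν : IsOrthogonallyInvariantOnSphere ν) : 0 < Fintype.card n := by
  obtain ⟨z, hz⟩ := hν.ae_dotProduct_self.exists
  refine Fintype.card_pos_iff.2 ?_
  by_contra h
  simp [dotProduct, not_nonempty_iff.1 h] at hz

lemma integral_comp_mulVec (hν : IsOrthogonallyInvariantOnSphere ν) {Q : Matrix n n ℝ}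
    (hQ : Q ∈ orthogonalGroup n ℝ) {f : (n → ℝ) → ℝ} (hf : Continuous f) :
    ∫ z, f (Q *ᵥ z) ∂ν = ∫ z, f z ∂ν := by
  conv_rhs => rw [← hν.map_mulVec Q hQ]
  exact (integral_map (Continuous.matrix_mulVec continuous_const continuous_id).aemeasurable
    hf.aestronglyMeasurable).symm

section FiniteMeasure

variable [IsFiniteMeasure ν]

lemma integrable (hν : IsOrthogonallyInvariantOnSphere ν) {f : (n → ℝ) → ℝ}
    (hf : Continuous f) : Integrable f ν :=
  integrable_of_continuous_of_ae_mem_compact (isCompact_closedBall 0 1) hν.ae_mem_closedBall hf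

lemma hasDerivAt_integral (hν : IsOrthogonallyInvariantOnSphere ν) {F F' : ℝ → (n → ℝ) → ℝ}
    (hF : Continuous (Function.uncurry F)) (hF' : Continuous (Function.uncurry F'))
    (hderiv : ∀ x z, HasDerivAt (F · z) (F' x z) x) (x₀ : ℝ) :
    HasDerivAt (fun x => ∫ z, F x z ∂ν) (∫ z, F' x₀ z ∂ν) x₀ :=
  hasDerivAt_integral_of_continuous_of_ae_mem_compact (isCompact_closedBall 0 1)
    hν.ae_mem_closedBall hF hF' hderiv x₀

lemma integral_stein_pair (hν : IsOrthogonallyInvariantOnSphere ν) {B : Finset n} {t s : n}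
    (ht : t ∈ B) (hs : s ∉ B) (c : ℝ) :
    ∫ z, (z t ^ 2 - z s ^ 2 - 2 * c * (z t ^ 2 * z s ^ 2)) * exp (c * partialSqNorm B z) ∂ν
      = 0 := by
  have hts : t ≠ s := ne_of_mem_of_not_mem ht hs
  let a : ℝ → (n → ℝ) → ℝ := fun θ z => cos θ * z t - sin θ * z s
  let b : ℝ → (n → ℝ) → ℝ := fun θ z => sin θ * z t + cos θ * z s
  let e : ℝ → (n → ℝ) → ℝ := fun θ z => exp (c * (partialSqNorm B z - z t ^ 2 + a θ z ^ 2))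
  have hconst : ∀ θ, ∫ z, a θ z * b θ z * e θ z ∂ν =
      ∫ z, z t * z s * exp (c * partialSqNorm B z) ∂ν := fun θ => by
    refine Eq.trans ?_ (hν.integral_comp_mulVec (givensRotation_mem_orthogonalGroup hts θ)
      (f := fun w => w t * w s * exp (c * partialSqNorm B w)) (by fun_prop))
    congr 1 with z
    simp only [a, b, e, partialSqNorm_givensRotation_mulVec ht hs, givensRotation_mulVec_apply,
      if_neg hts.symm, ↓reduceIte]
  have hderiv : ∀ θ z, HasDerivAt (fun θ => a θ z * b θ z * e θ z)
      ((a θ z ^ 2 - b θ z ^ 2 - 2 * c * (a θ z ^ 2 * b θ z ^ 2)) * e θ z) θ := fun θ z => by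
    have ha : HasDerivAt (fun θ => a θ z) (-b θ z) θ :=
      (((hasDerivAt_cos θ).mul_const (z t)).sub ((hasDerivAt_sin θ).mul_const (z s))).congr_deriv
        (by simp only [b]; ring)
    have hb : HasDerivAt (fun θ => b θ z) (a θ z) θ :=
      (((hasDerivAt_sin θ).mul_const (z t)).add ((hasDerivAt_cos θ).mul_const (z s))).congr_deriv
        (by simp only [a]; ring)
    have he : HasDerivAt (fun θ => e θ z) (e θ z * (c * (2 * a θ z * -b θ z))) θ :=
      (((ha.fun_pow 2).const_add (partialSqNorm B z - z t ^ 2)).const_mul c).exp.congr_deriv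
        (by simp only [e]; push_cast; ring)
    exact ((ha.fun_mul hb).fun_mul he).congr_deriv (by ring)
  have h := hν.hasDerivAt_integral (by fun_prop) (by fun_prop) hderiv 0
  simp only [hconst] at h
  convert h.unique (hasDerivAt_const 0 _) using 2 with z
  simp [a, b, e]

lemma integral_stein (hν : IsOrthogonallyInvariantOnSphere ν) (B : Finset n) (c : ℝ) :
    ∫ z, (Fintype.card n * partialSqNorm B z - B.card
      - 2 * c * (partialSqNorm B z * (1 - partialSqNorm B z))) * exp (c * partialSqNorm B z) ∂ν
      = 0 := by
  have hsum : ∀ᵐ z ∂ν, (Fintype.card n * partialSqNorm B z - B.card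
      - 2 * c * (partialSqNorm B z * (1 - partialSqNorm B z))) * exp (c * partialSqNorm B z) =
      ∑ t ∈ B, ∑ s ∈ Bᶜ,
        (z t ^ 2 - z s ^ 2 - 2 * c * (z t ^ 2 * z s ^ 2)) * exp (c * partialSqNorm B z) := by
    filter_upwards [hν.ae_dotProduct_self] with z hz
    have hcompl : partialSqNorm Bᶜ z = 1 - partialSqNorm B z := by
      rw [← hz, ← partialSqNorm_add_partialSqNorm_compl B z]
      ring
    have hcard : (Bᶜ.card : ℝ) = Fintype.card n - B.card := by
      rw [Finset.card_compl, Nat.cast_sub (Finset.card_le_univ B)]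
    simp only [← Finset.sum_mul, Finset.sum_sub_distrib, Finset.sum_const, nsmul_eq_mul,
      ← Finset.mul_sum]
    rw [show ∑ t ∈ B, z t ^ 2 = partialSqNorm B z from rfl,
      show ∑ s ∈ Bᶜ, z s ^ 2 = partialSqNorm Bᶜ z from rfl, hcompl, hcard]
    ring
  rw [integral_congr_ae hsum, integral_finsetSum _ fun t _ => integrable_finsetSum _
    fun s _ => hν.integrable (by fun_prop)]
  refine Finset.sum_eq_zero fun t ht => ?_
  rw [integral_finsetSum _ fun s _ => hν.integrable (by fun_prop)]
  exact Finset.sum_eq_zero fun s hs => hν.integral_stein_pair ht (Finset.mem_compl.1 hs) c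

lemma hasDerivAt_mgf_partialSqNorm (hν : IsOrthogonallyInvariantOnSphere ν) (B : Finset n)
    (c : ℝ) : HasDerivAt (mgf (partialSqNorm B) ν)
      (∫ z, partialSqNorm B z * exp (c * partialSqNorm B z) ∂ν) c :=
  hν.hasDerivAt_integral (F := fun x z => exp (x * partialSqNorm B z)) (by fun_prop)
    (by fun_prop) (fun x z => ((hasDerivAt_mul_const _).exp).congr_deriv (mul_comm _ _)) c

lemma mul_deriv_mgf_partialSqNorm_nonpos (hν : IsOrthogonallyInvariantOnSphere ν)
    (B : Finset n) (c : ℝ) :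
    c * ((Fintype.card n - 2 * c) * ∫ z, partialSqNorm B z * exp (c * partialSqNorm B z) ∂ν
      - B.card * mgf (partialSqNorm B) ν c) ≤ 0 := by
  set S := partialSqNorm B
  have hint : ∀ f : (n → ℝ) → ℝ, Continuous f → Integrable f ν := fun f hf => hν.integrable hf
  calc c * ((Fintype.card n - 2 * c) * ∫ z, S z * exp (c * S z) ∂ν - B.card * mgf S ν c)
      = ∫ z, c * (Fintype.card n - 2 * c) * (S z * exp (c * S z))
          - c * B.card * exp (c * S z) ∂ν := by
        rw [integral_sub (hint _ (by fun_prop)) (hint _ (by fun_prop)), integral_const_mul,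
          integral_const_mul, mgf]
        ring
    _ = ∫ z, c * ((Fintype.card n * S z - B.card - 2 * c * (S z * (1 - S z)))
          * exp (c * S z)) - 2 * c ^ 2 * (S z ^ 2 * exp (c * S z)) ∂ν := by
        congr 1 with z
        ring
    _ = -(2 * c ^ 2 * ∫ z, S z ^ 2 * exp (c * S z) ∂ν) := by
        rw [integral_sub (hint _ (by fun_prop)) (hint _ (by fun_prop)), integral_const_mul,
          integral_const_mul, hν.integral_stein]
        ring
    _ ≤ 0 := neg_nonpos.2 (mul_nonneg (by positivity) (integral_nonneg fun z => by positivity))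

end FiniteMeasure

variable [IsProbabilityMeasure ν]

lemma mgf_partialSqNorm_sq_mul_pow_le_one (hν : IsOrthogonallyInvariantOnSphere ν)
    (B : Finset n) {c : ℝ} (hc : 2 * c < Fintype.card n) :
    mgf (partialSqNorm B) ν c ^ 2 * (1 - 2 * c / Fintype.card n) ^ B.card ≤ 1 := by
  set d : ℝ := (Fintype.card n : ℝ)
  set m := B.card
  set ψ := mgf (partialSqNorm B) ν
  set ψ' := fun x => ∫ z, partialSqNorm B z * exp (x * partialSqNorm B z) ∂ν
  have hd : 0 < d := Nat.cast_pos.2 hν.card_pos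
  have hΦ : ∀ x, HasDerivAt (fun x => ψ x ^ 2 * (1 - 2 * x / d) ^ m)
      (2 * ψ x ^ (2 - 1) * ψ' x * (1 - 2 * x / d) ^ m
        + ψ x ^ 2 * (m * (1 - 2 * x / d) ^ (m - 1) * -(2 * 1 / d))) x := fun x =>
    ((hν.hasDerivAt_mgf_partialSqNorm B x).fun_pow 2).fun_mul
      (((((hasDerivAt_id x).const_mul 2).div_const d).const_sub 1).fun_pow m)
  have hsign : ∀ x < d / 2, x * (2 * ψ x ^ (2 - 1) * ψ' x * (1 - 2 * x / d) ^ m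
        + ψ x ^ 2 * (m * (1 - 2 * x / d) ^ (m - 1) * -(2 * 1 / d))) ≤ 0 := by
    intro x hx
    have hu : 0 < 1 - 2 * x / d := by rw [sub_pos, div_lt_one hd]; linarith
    have hpow : (m : ℝ) * (1 - 2 * x / d) ^ (m - 1) * (1 - 2 * x / d)
        = m * (1 - 2 * x / d) ^ m := by
      rcases Nat.eq_zero_or_pos m with h | h
      · simp [h]
      · rw [mul_assoc, pow_sub_one_mul h.ne']
    have hψ : 0 < ψ x := mgf_pos (hν.integrable (by fun_prop))
    refine nonpos_of_mul_nonpos_right ?_ hu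
    have key : (1 - 2 * x / d) * (x * (2 * ψ x ^ (2 - 1) * ψ' x * (1 - 2 * x / d) ^ m
        + ψ x ^ 2 * (m * (1 - 2 * x / d) ^ (m - 1) * -(2 * 1 / d)))) =
        2 / d * ψ x * (1 - 2 * x / d) ^ m * (x * ((d - 2 * x) * ψ' x - m * ψ x)) := by
      linear_combination (-2 * d⁻¹ * x * ψ x ^ 2) * hpow
        - (2 * x * ψ x * ψ' x * (1 - 2 * x / d) ^ m) * mul_inv_cancel₀ hd.ne'
    rw [key]
    exact mul_nonpos_of_nonneg_of_nonpos (by positivity)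
      (hν.mul_deriv_mgf_partialSqNorm_nonpos B x)
  calc ψ c ^ 2 * (1 - 2 * c / d) ^ m ≤ ψ 0 ^ 2 * (1 - 2 * 0 / d) ^ m :=
        apply_le_apply_zero_of_mul_deriv_nonpos (half_pos hd) (fun x _ => hΦ x) hsign
          (by linarith)
    _ = 1 := by simp [ψ]

lemma measureReal_le_partialSqNorm_le (hν : IsOrthogonallyInvariantOnSphere ν) (B : Finset n)
    {γ : ℝ} (hγ : 1 ≤ γ) :
    ν.real {z | γ * (B.card / Fintype.card n) ≤ partialSqNorm B z} ≤
      exp (-(B.card * (γ - 1 - log γ)) / 2) := by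
  have hd : (0 : ℝ) < Fintype.card n := Nat.cast_pos.2 hν.card_pos
  have hc : 0 ≤ Fintype.card n / 2 * (1 - γ⁻¹) :=
    mul_nonneg (by positivity) (sub_nonneg.2 (inv_le_one_of_one_le₀ hγ))
  refine le_exp_of_chernoff_of_mgf_sq_mul_pow_le_one (by positivity) hd measureReal_nonneg
    (measure_ge_le_exp_mul_mgf _ hc (hν.integrable (by fun_prop)))
    (hν.mgf_partialSqNorm_sq_mul_pow_le_one B ?_)
  have : 0 < γ⁻¹ := by positivity
  nlinarith

lemma measureReal_partialSqNorm_le_le (hν : IsOrthogonallyInvariantOnSphere ν) (B : Finset n)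
    {γ : ℝ} (hγ0 : 0 < γ) (hγ1 : γ ≤ 1) :
    ν.real {z | partialSqNorm B z ≤ γ * (B.card / Fintype.card n)} ≤
      exp (-(B.card * (γ - 1 - log γ)) / 2) := by
  have hd : (0 : ℝ) < Fintype.card n := Nat.cast_pos.2 hν.card_pos
  have hc : Fintype.card n / 2 * (1 - γ⁻¹) ≤ 0 :=
    mul_nonpos_of_nonneg_of_nonpos (by positivity) (sub_nonpos.2 ((one_le_inv₀ hγ0).2 hγ1))
  exact le_exp_of_chernoff_of_mgf_sq_mul_pow_le_one hγ0 hd measureReal_nonneg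
    (measure_le_le_exp_mul_mgf _ hc (hν.integrable (by fun_prop)))
    (hν.mgf_partialSqNorm_sq_mul_pow_le_one B (by linarith))

lemma measureReal_lt_abs_sqrt_mul_sqrt_partialSqNorm_sub_one_le
    (hν : IsOrthogonallyInvariantOnSphere ν) {B : Finset n} (hB : B.Nonempty) {ε : ℝ}
    (hε0 : 0 < ε) (hε1 : ε < 1) :
    ν.real {z | ε < |√(Fintype.card n / B.card) * √(partialSqNorm B z) - 1|} ≤
      2 * exp (-(B.card * ε ^ 2) / 2) := by
  have hd : (0 : ℝ) < Fintype.card n := Nat.cast_pos.2 hν.card_pos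
  have hm : (0 : ℝ) < B.card := Nat.cast_pos.2 hB.card_pos
  have htail : ∀ η : ℝ, -1 < η → exp (-(B.card * ((1 + η) ^ 2 - 1 - log ((1 + η) ^ 2))) / 2) ≤
      exp (-(B.card * η ^ 2) / 2) := fun η hη => by
    have := sq_le_one_add_sq_sub_one_sub_log hη
    gcongr
  calc ν.real {z | ε < |√(Fintype.card n / B.card) * √(partialSqNorm B z) - 1|}
      ≤ ν.real ({z | (1 + ε) ^ 2 * (B.card / Fintype.card n) ≤ partialSqNorm B z}
          ∪ {z | partialSqNorm B z ≤ (1 - ε) ^ 2 * (B.card / Fintype.card n)}) :=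
        measureReal_mono fun z hz => le_or_le_of_lt_abs_sqrt_mul_sqrt_sub_one hd hm
          (partialSqNorm_nonneg B z) hε0.le hz
    _ ≤ _ := measureReal_union_le _ _
    _ ≤ exp (-(B.card * ε ^ 2) / 2) + exp (-(B.card * ε ^ 2) / 2) := by
        gcongr
        · exact (hν.measureReal_le_partialSqNorm_le B (by nlinarith)).trans
            (htail ε (by linarith))
        · have := (hν.measureReal_partialSqNorm_le_le B (γ := (1 + -ε) ^ 2) (by nlinarith)
            (by nlinarith)).trans (htail (-ε) (by linarith))
          rwa [← sub_eq_add_neg, neg_sq] at this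
    _ = 2 * exp (-(B.card * ε ^ 2) / 2) := by ring

end IsOrthogonallyInvariantOnSphere

lemma isOrthogonallyInvariantOnSphere_map_mulVec {n : Type*} [Fintype n] [DecidableEq n]
    {μ : Measure (n → n → ℝ)} (horth : ∀ᵐ R ∂μ, R ∈ orthogonalGroup n ℝ)
    (hinv : ∀ Q ∈ orthogonalGroup n ℝ, μ.map (fun R i j => ∑ t, Q i t * R t j) = μ)
    {x : n → ℝ} (hx : x ⬝ᵥ x = 1) :
    IsOrthogonallyInvariantOnSphere (μ.map fun R : n → n → ℝ => R *ᵥ x) := by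
  have hmeas : Measurable fun R : n → n → ℝ => R *ᵥ x := by fun_prop
  refine ⟨?_, fun Q hQ => ?_⟩
  · rw [ae_map_iff hmeas.aemeasurable
      (measurableSet_eq_fun (f := fun z : n → ℝ => z ⬝ᵥ z) (by fun_prop) measurable_const)]
    filter_upwards [horth] with R hR
    rw [mem_orthogonalGroup_iff_dotProduct_mulVec.1 hR, hx]
  · have hQmeas : Measurable fun R : n → n → ℝ => fun i j => ∑ t, Q i t * R t j := by fun_prop
    rw [Measure.map_map (by fun_prop) hmeas]
    conv_rhs => rw [← hinv Q hQ, Measure.map_map hmeas hQmeas]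
    congr 1
    funext R
    exact mulVec_mulVec x Q (of R)

section Blocks

variable {d d' : ℕ} (hdvd : d' ∣ d)

def blockIndex : Fin (d / d') × Fin d' ≃ Fin d :=
  finProdFinEquiv.trans (finCongr (Nat.div_mul_cancel hdvd))

lemma rowBlock_apply (R : Fin d → Fin d → ℝ) (i : Fin (d / d')) (a : Fin d') (j : Fin d) :
    rowBlock d d' hdvd R i a j = R (blockIndex hdvd (i, a)) j := by
  simp only [rowBlock, blockIndex, Equiv.trans_apply]
  congr 1
  exact Fin.ext (by simp; ring)

lemma isOrthDecomp_rowBlock {R : Fin d → Fin d → ℝ}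
    (hR : ∀ i j, ∑ t, R i t * R j t = if i = j then 1 else 0) :
    IsOrthDecomp d d' (rowBlock d d' hdvd R) := fun i a j b => by
  simp only [rowBlock_apply, hR, (blockIndex hdvd).injective.eq_iff, Prod.mk.injEq]

def blockRows (i : Fin (d / d')) : Finset (Fin d) :=
  Finset.univ.map ((Function.Embedding.sectR i (Fin d')).trans (blockIndex hdvd).toEmbedding)

lemma card_blockRows (i : Fin (d / d')) : (blockRows hdvd i).card = d' := by
  simp [blockRows]

lemma partialSqNorm_blockRows_mulVec (i : Fin (d / d')) (R : Fin d → Fin d → ℝ)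
    (x : Fin d → ℝ) : partialSqNorm (blockRows hdvd i) (R *ᵥ x) =
      ∑ a, (∑ j, rowBlock d d' hdvd R i a j * x j) ^ 2 := by
  simp [partialSqNorm, blockRows, rowBlock_apply, mulVec, dotProduct]

end Blocks

lemma two_mul_exp_neg_mul_sq_div_two_lt {m ε δ : ℝ} (hε : 0 < ε) (hδ0 : 0 < δ) (hδ : δ < 1 / 2)
    (hm : 4 * (ε ^ 2)⁻¹ * log (1 / δ) ≤ m) : 2 * exp (-(m * ε ^ 2) / 2) < δ := by
  rw [mul_comm 4, mul_assoc, inv_mul_le_iff₀ (by positivity), one_div, log_inv] at hm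
  have : exp (-(m * ε ^ 2) / 2) ≤ δ ^ 2 := by
    rw [← exp_log hδ0, ← exp_nat_mul, exp_le_exp]
    push_cast
    linarith
  nlinarith

/-- There is a universal constant `K` such that for all `ε, δ ∈ (0,1/2)` and `d' ∣ d` with
`d' ≥ K·ε⁻²·log(1/δ)`: if `R` is a random `d×d` matrix distributed according to the Haar
probability measure on the orthogonal group `O(d)` (formalized as: `μ` is a probability
measure giving full mass to orthogonal matrices — those with orthonormal rows — and invariant
under left multiplication by any orthogonal matrix), and `P_i` consists of rows
`(i−1)d'+1, …, i·d'` of `R`, then `{P_i}` is almost surely an orthogonal decomposition of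
`ℝ^d` into `ℝ^{d'}`, and for every unit vector `x` and every `i`,
`ℙ(|√(d/d')·‖P_i x‖₂ − 1| > ε) < δ`. -/
theorem haar_block_decomposition_guarantee :
    ∃ K : ℝ, 0 < K ∧ ∀ ε δ : ℝ, 0 < ε → ε < 1 / 2 → 0 < δ → δ < 1 / 2 →
    ∀ d d' : ℕ, ∀ hdvd : d' ∣ d,
      K * (ε ^ 2)⁻¹ * Real.log (1 / δ) ≤ (d' : ℝ) →
    ∀ μ : Measure (Fin d → Fin d → ℝ), IsProbabilityMeasure μ →
      μ {R | ∀ i j, (∑ t, R i t * R j t) = if i = j then (1 : ℝ) else 0} = 1 →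
      (∀ Q : Fin d → Fin d → ℝ,
        (∀ i j, (∑ t, Q i t * Q j t) = if i = j then (1 : ℝ) else 0) →
        Measure.map (fun R => fun i j => ∑ t, Q i t * R t j) μ = μ) →
      (∀ᵐ R ∂μ, IsOrthDecomp d d' (rowBlock d d' hdvd R)) ∧
      ∀ x : Fin d → ℝ, Real.sqrt (∑ j, (x j) ^ 2) = 1 → ∀ i : Fin (d / d'),
        (μ {R | |Real.sqrt ((d : ℝ) / (d' : ℝ)) *
            Real.sqrt (∑ a, (∑ j, rowBlock d d' hdvd R i a j * x j) ^ 2) - 1|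
              > ε}).toReal < δ := by
  refine ⟨4, by norm_num, fun ε δ hε0 hε2 hδ0 hδ2 d d' hdvd hd' μ _ hμorth hμinv => ?_⟩
  have horth := ae_mem_orthogonalGroup_of_measure_eq_one hμorth
  refine ⟨horth.mono fun R hR => isOrthDecomp_rowBlock hdvd
    (mem_orthogonalGroup_iff_sum_mul_eq.1 hR), fun x hx i => ?_⟩
  have hx' : x ⬝ᵥ x = 1 := by
    simpa only [dotProduct, sq, Real.sqrt_eq_one] using hx
  have hmeas : Measurable fun R : Fin d → Fin d → ℝ => R *ᵥ x := by fun_prop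
  have := Measure.isProbabilityMeasure_map (μ := μ) hmeas.aemeasurable
  have hν := isOrthogonallyInvariantOnSphere_map_mulVec horth
    (fun Q hQ => hμinv Q (mem_orthogonalGroup_iff_sum_mul_eq.1 hQ)) hx'
  have hB : (blockRows hdvd i).Nonempty := by
    rw [← Finset.card_pos, card_blockRows, ← Nat.cast_pos (α := ℝ)]
    have := Real.log_pos (one_lt_one_div hδ0 (by linarith))
    exact lt_of_lt_of_le (by positivity) hd'
  have hevent := hν.measureReal_lt_abs_sqrt_mul_sqrt_partialSqNorm_sub_one_le hB hε0
    (by linarith)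
  rw [measureReal_def, Measure.map_apply hmeas (measurableSet_lt measurable_const
    (by fun_prop)), card_blockRows, Fintype.card_fin] at hevent
  simp only [Set.preimage_ofPred_eq, partialSqNorm_blockRows_mulVec] at hevent
  exact hevent.trans_lt (two_mul_exp_neg_mul_sq_div_two_lt hε0 hδ0 hδ2 hd')
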